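/- Let R be a strongly right C4*-ring admitting a right-to-left symmetry datum R = Σ × T, and let e = (e_Σ, e_T) be an idempotent of R with ReR = R. If the corner ring e_T T e_T has summand-square-free right regular module and satisfies the hereditary side-transfer condition HST and the corner-stability axiom CSA, then the full corner eRe is a strongly left C4*-ring. -/

import Mathlib

open MulOpposite

section C4Defs

/-- A submodule is a direct summand if it has a complement. -/
def IsDirectSummand {R M : Type*} [Ring R] [AddCommGroup M] [Module R M]
    (A : Submodule R M) : Prop :=
  ∃ B : Submodule R M, IsCompl A B

/-- `M` is a `C4`-module over `R`: for every internal direct sum decomposition `M = A ⊕ B`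
and every homomorphism `f : A → B` whose kernel is a direct summand of `A`, the image of `f`
is a direct summand of `B`. -/
def IsC4Module (R M : Type*) [Ring R] [AddCommGroup M] [Module R M] : Prop :=
  ∀ A B : Submodule R M, IsCompl A B → ∀ f : A →ₗ[R] B,
    IsDirectSummand (LinearMap.ker f) → IsDirectSummand (LinearMap.range f)

/-- `M` is a `C4*`-module: every submodule of `M` is a `C4`-module. -/
def IsC4StarModule (R M : Type*) [Ring R] [AddCommGroup M] [Module R M] : Prop :=
  ∀ N : Submodule R M, IsC4Module R N

/-- `M` is square-free: no nonzero submodules `A`, `B` with `A ⊓ B = ⊥` and `A ≅ B`. -/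
def IsSquareFreeModule (R M : Type*) [Ring R] [AddCommGroup M] [Module R M] : Prop :=
  ∀ A B : Submodule R M, A ≠ ⊥ → B ≠ ⊥ → A ⊓ B = ⊥ → IsEmpty (A ≃ₗ[R] B)

/-- `M` is summand-square-free: no nonzero direct summands `A`, `B` with `A ⊓ B = ⊥`
and `A ≅ B`. -/
def IsSummandSquareFree (R M : Type*) [Ring R] [AddCommGroup M] [Module R M] : Prop :=
  ∀ A B : Submodule R M, IsDirectSummand A → IsDirectSummand B →
    A ≠ ⊥ → B ≠ ⊥ → A ⊓ B = ⊥ → IsEmpty (A ≃ₗ[R] B)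

/-- `X` is an essential submodule of `A`. -/
def IsEssentialIn {R M : Type*} [Ring R] [AddCommGroup M] [Module R M]
    (X A : Submodule R M) : Prop :=
  X ≤ A ∧ ∀ N : Submodule R M, N ≤ A → N ≠ ⊥ → X ⊓ N ≠ ⊥

/-- A triple `(X, Y, f)` where `X`, `Y` are semisimple direct summands of `M` with
`X ⊓ Y = ⊥` and `f : X ≅ Y` an isomorphism.  These are the elements of the poset `S(M)`
from the definition of semi-weak-CS modules. -/
structure SWTriple (R M : Type*) [Ring R] [AddCommGroup M] [Module R M] where
  X : Submodule R M
  Y : Submodule R M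
  semisimpleX : IsSemisimpleModule R X
  semisimpleY : IsSemisimpleModule R Y
  summandX : IsDirectSummand X
  summandY : IsDirectSummand Y
  disj : X ⊓ Y = ⊥
  f : X ≃ₗ[R] Y

/-- The extension order on the poset `S(M)` of triples: `(X₁,Y₁,f₁) ≤ (X₂,Y₂,f₂)` iff
`X₁ ≤ X₂`, `Y₁ ≤ Y₂` and `f₂` restricts to `f₁` on `X₁`. -/
def SWTriple.Extends {R M : Type*} [Ring R] [AddCommGroup M] [Module R M]
    (t s : SWTriple R M) : Prop :=
  ∃ hX : t.X ≤ s.X, t.Y ≤ s.Y ∧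
    ∀ x : t.X, (s.f ⟨x.1, hX x.2⟩ : M) = (t.f x : M)

/-- `M` is semi-weak-CS: for every chain in the poset `S(M)`, with `X` the union of the first
components and `Y` the union of the second components, there are direct summands `A`, `B`
of `M` with `X` essential in `A` and `Y` essential in `B`. -/
def IsSemiWeakCS (R M : Type*) [Ring R] [AddCommGroup M] [Module R M] : Prop :=
  ∀ C : Set (SWTriple R M), IsChain SWTriple.Extends C →
    ∃ A B : Submodule R M, IsDirectSummand A ∧ IsDirectSummand B ∧
      IsEssentialIn (⨆ t ∈ C, t.X) A ∧ IsEssentialIn (⨆ t ∈ C, t.Y) B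

/-- `M` is strongly `C4*` if it is both semi-weak-CS and `C4*`. -/
def IsStronglyC4StarModule (R M : Type*) [Ring R] [AddCommGroup M] [Module R M] : Prop :=
  IsSemiWeakCS R M ∧ IsC4StarModule R M

/-- `R` is a right `C4*`-ring: the right regular module `R_R` (i.e. `R` as a module over
`Rᵐᵒᵖ`) is a `C4*`-module. -/
def IsRightC4StarRing (R : Type*) [Ring R] : Prop := IsC4StarModule Rᵐᵒᵖ R

/-- `R` is a left `C4*`-ring: the left regular module `_RR` is a `C4*`-module. -/
def IsLeftC4StarRing (R : Type*) [Ring R] : Prop := IsC4StarModule R R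

/-- `R` is a strongly right `C4*`-ring. -/
def IsStronglyRightC4StarRing (R : Type*) [Ring R] : Prop := IsStronglyC4StarModule Rᵐᵒᵖ R

/-- `R` is a strongly left `C4*`-ring. -/
def IsStronglyLeftC4StarRing (R : Type*) [Ring R] : Prop := IsStronglyC4StarModule R R

/-- `R` is right semi-weak-CS. -/
def IsRightSemiWeakCSRing (R : Type*) [Ring R] : Prop := IsSemiWeakCS Rᵐᵒᵖ R

/-- `R` is left semi-weak-CS. -/
def IsLeftSemiWeakCSRing (R : Type*) [Ring R] : Prop := IsSemiWeakCS R R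

/-- The left square-free transfer condition `LSF`: if the right regular module `T_T` is
summand-square-free then the left regular module `_TT` is square-free. -/
def LSF (T : Type*) [Ring T] : Prop :=
  IsSummandSquareFree Tᵐᵒᵖ T → IsSquareFreeModule T T

end C4Defs

section Corner

variable {T : Type*} [Ring T]

/-- The corner `eTe = {x : T | e * x = x ∧ x * e = x}` as a non-unital subring. -/
def cornerSubring (e : T) : NonUnitalSubring T where
  carrier := {x : T | e * x = x ∧ x * e = x}
  add_mem' := by
    rintro a b ⟨ha1, ha2⟩ ⟨hb1, hb2⟩
    exact ⟨by rw [mul_add, ha1, hb1], by rw [add_mul, ha2, hb2]⟩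
  zero_mem' := ⟨mul_zero e, zero_mul e⟩
  neg_mem' := by
    rintro a ⟨ha1, ha2⟩
    exact ⟨by rw [mul_neg, ha1], by rw [neg_mul, ha2]⟩
  mul_mem' := by
    rintro a b ⟨ha1, ha2⟩ ⟨hb1, hb2⟩
    exact ⟨by rw [← mul_assoc, ha1], by rw [mul_assoc, hb2]⟩

theorem mem_cornerSubring {e x : T} :
    x ∈ cornerSubring e ↔ e * x = x ∧ x * e = x := Iff.rfl

/-- The corner ring `eTe` associated to an idempotent `e` of `T`; its identity is `e`. -/
def Corner (e : T) (he : IsIdempotentElem e) : Type _ := ↥(cornerSubring e)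

instance {e : T} {he : IsIdempotentElem e} : Ring (Corner e he) :=
  { (inferInstance : NonUnitalRing ↥(cornerSubring e)) with
    one := ⟨e, he, he⟩
    one_mul := fun x => Subtype.ext (mem_cornerSubring.mp x.2).1
    mul_one := fun x => Subtype.ext (mem_cornerSubring.mp x.2).2 }

/-- `eT = {x : T | e * x = x}` as an additive subgroup; it is a left module over the
corner ring `eTe`. -/
def leftPart (e : T) : AddSubgroup T where
  carrier := {x : T | e * x = x}
  add_mem' := by
    intro a b ha hb
    simp only [Set.mem_setOf_eq] at *
    rw [mul_add, ha, hb]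
  zero_mem' := mul_zero e
  neg_mem' := by
    intro a ha
    simp only [Set.mem_setOf_eq] at *
    rw [mul_neg, ha]

/-- `Te = {x : T | x * e = x}` as an additive subgroup; it is a right module over the
corner ring `eTe`. -/
def rightPart (e : T) : AddSubgroup T where
  carrier := {x : T | x * e = x}
  add_mem' := by
    intro a b ha hb
    simp only [Set.mem_setOf_eq] at *
    rw [add_mul, ha, hb]
  zero_mem' := zero_mul e
  neg_mem' := by
    intro a ha
    simp only [Set.mem_setOf_eq] at *
    rw [neg_mul, ha]

theorem mem_leftPart {e x : T} : x ∈ leftPart e ↔ e * x = x := Iff.rfl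

theorem mem_rightPart {e x : T} : x ∈ rightPart e ↔ x * e = x := Iff.rfl

/-- `eT` is a (unital) left module over the corner ring `eTe`. -/
instance {e : T} {he : IsIdempotentElem e} : Module (Corner e he) ↥(leftPart e) where
  smul c x := ⟨c.1 * x.1, by
    have h1 : e * c.1 = c.1 := (mem_cornerSubring.mp c.2).1
    show e * (c.1 * x.1) = c.1 * x.1
    rw [← mul_assoc, h1]⟩
  one_smul x := Subtype.ext (by
    change e * x.1 = x.1
    exact mem_leftPart.mp x.2)
  mul_smul a b x := Subtype.ext (by
    change (a.1 * b.1) * x.1 = a.1 * (b.1 * x.1)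
    rw [mul_assoc])
  smul_zero a := Subtype.ext (by
    show a.1 * 0 = 0
    exact mul_zero _)
  smul_add a x y := Subtype.ext (by
    show a.1 * (x.1 + y.1) = a.1 * x.1 + a.1 * y.1
    exact mul_add _ _ _)
  add_smul a b x := Subtype.ext (by
    change (a.1 + b.1) * x.1 = a.1 * x.1 + b.1 * x.1
    exact add_mul _ _ _)
  zero_smul x := Subtype.ext (by
    change (0 : T) * x.1 = 0
    exact zero_mul _)

/-- `Te` is a (unital) right module over the corner ring `eTe`, i.e. a module over
`(eTe)ᵐᵒᵖ`. -/
instance {e : T} {he : IsIdempotentElem e} : Module (Corner e he)ᵐᵒᵖ ↥(rightPart e) where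
  smul c x := ⟨x.1 * (unop c).1, by
    have h2 : (unop c).1 * e = (unop c).1 := (mem_cornerSubring.mp (unop c).2).2
    show (x.1 * (unop c).1) * e = x.1 * (unop c).1
    rw [mul_assoc, h2]⟩
  one_smul x := Subtype.ext (by
    change x.1 * e = x.1
    exact mem_rightPart.mp x.2)
  mul_smul a b x := Subtype.ext (by
    change x.1 * ((unop b).1 * (unop a).1) = (x.1 * (unop b).1) * (unop a).1
    rw [mul_assoc])
  smul_zero a := Subtype.ext (by
    show (0 : T) * (unop a).1 = 0
    exact zero_mul _)
  smul_add a x y := Subtype.ext (by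
    show (x.1 + y.1) * (unop a).1 = x.1 * (unop a).1 + y.1 * (unop a).1
    exact add_mul _ _ _)
  add_smul a b x := Subtype.ext (by
    change x.1 * ((unop a).1 + (unop b).1) = x.1 * (unop a).1 + x.1 * (unop b).1
    exact mul_add _ _ _)
  zero_smul x := Subtype.ext (by
    change x.1 * (0 : T) = 0
    exact mul_zero _)

/-- The hereditary side-transfer condition `HST`: for every idempotent `e` of `T`, if the
module `eT`/`Te` is summand-square-free as a right `eTe`-module (formalized on the carrier
`Te = rightPart e`, which carries the unital right `eTe`-action; at `e = 1` this is the right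
regular module `T_T`), then the left `eTe`-module (carrier `eT = leftPart e`, carrying the
unital left `eTe`-action; at `e = 1` this is the left regular module `_TT`) is square-free. -/
def HST (T : Type*) [Ring T] : Prop :=
  ∀ (e : T) (he : IsIdempotentElem e),
    IsSummandSquareFree (Corner e he)ᵐᵒᵖ ↥(rightPart e) →
      IsSquareFreeModule (Corner e he) ↥(leftPart e)

/-- The corner-stability axiom `CSA`: for every idempotent `e` of `T`, the left regular
module of the corner ring `eTe` is semi-weak-CS. -/
def CSAxiom (T : Type*) [Ring T] : Prop :=
  ∀ (e : T) (he : IsIdempotentElem e),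
    IsSemiWeakCS (Corner e he) (Corner e he)

end Corner

section SymmetryDatum

/-- A right-to-left symmetry datum on `R`: a ring decomposition `R ≅ S × T` where `S` is
semisimple artinian, the right regular module `T_T` is summand-square-free, the two ideals
`S`, `T` are orthogonal as right `R`-modules (no nonzero isomorphic right `R`-submodules),
and `T` satisfies `HST` and `CSA`. -/
structure RightToLeftSymmetryDatum (R S T : Type*) [Ring R] [Ring S] [Ring T] where
  iso : R ≃+* S × T
  semisimpleArtinian : IsSemisimpleRing S
  ssf : IsSummandSquareFree Tᵐᵒᵖ T
  orthogonal : ∀ A B : Submodule Rᵐᵒᵖ R,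
    (∀ a ∈ A, (iso a).2 = 0) → (∀ b ∈ B, (iso b).1 = 0) →
    A ≠ ⊥ → B ≠ ⊥ → IsEmpty (A ≃ₗ[Rᵐᵒᵖ] B)
  hst : HST T
  csa : CSAxiom T

end SymmetryDatum

section Beta

variable (R : Type*) [Ring R]

/-- The right annihilator `r_R(P) = {s : R | P s = 0}` of a right submodule `P` of `R`. -/
def rightAnnSet (P : Submodule Rᵐᵒᵖ R) : Set R := {s : R | ∀ p ∈ P, p * s = 0}

/-- The annihilator-bidual `β_r(P) = ℓ_R(r_R(P))`, as a right ideal of `R`. -/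
def betaR (P : Submodule Rᵐᵒᵖ R) : Submodule Rᵐᵒᵖ R where
  carrier := {r : R | ∀ s ∈ rightAnnSet R P, r * s = 0}
  add_mem' := by
    intro a b ha hb
    intro s hs
    rw [add_mul, ha s hs, hb s hs, add_zero]
  zero_mem' := by
    intro s hs
    exact zero_mul s
  smul_mem' := by
    intro c x hx s hs
    show (x * unop c) * s = 0
    rw [mul_assoc]
    refine hx _ ?_
    intro p hp
    rw [← mul_assoc]
    exact hs (p * unop c) (Submodule.smul_mem P c hp)

/-- A right ideal is a two-sided ideal which is a ring direct summand of `R` iff it is of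
the form `cR` for a central idempotent `c`. -/
def IsRingDirectSummandIdeal {R : Type*} [Ring R] (I : Submodule Rᵐᵒᵖ R) : Prop :=
  ∃ c : R, IsIdempotentElem c ∧ (∀ r : R, c * r = r * c) ∧ (∀ x : R, x ∈ I ↔ c * x = x)

/-- `R` has right semisimple annihilator asymmetry. -/
def HasRightSemisimpleAnnihilatorAsymmetry (R : Type*) [Ring R] : Prop :=
  ∃ P : Submodule Rᵐᵒᵖ R, IsSemisimpleModule Rᵐᵒᵖ P ∧ IsDirectSummand P ∧
    (¬ IsSemisimpleModule Rᵐᵒᵖ (betaR R P) ∨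
     (IsSemisimpleModule Rᵐᵒᵖ (betaR R P) ∧ ¬ IsRingDirectSummandIdeal (betaR R P)) ∨
     ¬ IsEssentialIn P (betaR R P))

end Beta

/-!
Transporting along `d.iso`, the corner `eRe` is the product of the corners `ε.1 S ε.1` and
`ε.2 T ε.2`. The first factor is semisimple, being a quotient of `(End_S (S ε.1))ᵐᵒᵖ`; the second
has square-free left regular module, since `HST` at the idempotent `1` turns summand-square-freeness
of the right regular module into square-freeness of the left one.

So it suffices to treat a module `M` split by a central idempotent `c` into a semisimple part `cM`
and a square-free part `(1 - c)M`. An isomorphism between disjoint submodules `U ≅ V` commutes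
with `c`, so it restricts to an isomorphism between the disjoint submodules `U ∩ (1 - c)M` and
`V ∩ (1 - c)M`, which must therefore vanish. Hence `U` and `V` lie in `cM`, where every submodule is
a direct summand; this gives both `C4*` and semi-weak-CS.
-/

open Function

section SemilinearTransport

variable {R S M N : Type*} [Ring R] [Ring S] [AddCommGroup M] [Module R M]
  [AddCommGroup N] [Module S N] {σ : R →+* S} [RingHomSurjective σ]

noncomputable def LinearMap.equivMapOfBijective (l : M →ₛₗ[σ] N) (hl : Bijective l)
    {A B : Submodule R M} (e : A ≃ₗ[R] B) : A.map l ≃ₗ[S] B.map l :=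
  let lA := AddEquiv.ofBijective (l.submoduleMap A).toAddMonoidHom
    ⟨l.submoduleMap_injective hl.1 A, l.submoduleMap_surjective A⟩
  let lB := AddEquiv.ofBijective (l.submoduleMap B).toAddMonoidHom
    ⟨l.submoduleMap_injective hl.1 B, l.submoduleMap_surjective B⟩
  (lA.symm.trans (e.toAddEquiv.trans lB)).toLinearEquiv fun s y => by
    obtain ⟨r, rfl⟩ := RingHomSurjective.is_surjective (σ := σ) s
    obtain ⟨x, rfl⟩ := lA.surjective y
    have hA : σ r • lA x = lA (r • x) := (map_smulₛₗ (l.submoduleMap A) r x).symm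
    simp only [AddEquiv.trans_apply, hA, AddEquiv.symm_apply_apply, LinearEquiv.coe_toAddEquiv]
    exact (congrArg lB (e.map_smul r x)).trans (map_smulₛₗ (l.submoduleMap B) r (e x))

theorem IsSquareFreeModule.of_bijective (hN : IsSquareFreeModule S N) (l : M →ₛₗ[σ] N)
    (hl : Bijective l) : IsSquareFreeModule R M := by
  intro A B hA hB hAB
  have hmap := Submodule.map_injective_of_injective hl.1
  refine ⟨fun e => (hN (A.map l) (B.map l) ?_ ?_ ?_).false (l.equivMapOfBijective hl e)⟩
  · simpa using hmap.ne hA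
  · simpa using hmap.ne hB
  · rw [← Submodule.map_inf l hl.1, hAB, Submodule.map_bot]

theorem IsSummandSquareFree.of_bijective (hN : IsSummandSquareFree S N) (l : M →ₛₗ[σ] N)
    (hl : Bijective l) : IsSummandSquareFree R M := by
  intro A B ⟨A', hA'⟩ ⟨B', hB'⟩ hA hB hAB
  have hmap := Submodule.map_injective_of_injective hl.1
  let o := Submodule.orderIsoMapComapOfBijective l hl
  refine ⟨fun e => (hN (A.map l) (B.map l) ⟨_, o.isCompl hA'⟩ ⟨_, o.isCompl hB'⟩ ?_ ?_ ?_).false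
    (l.equivMapOfBijective hl e)⟩
  · simpa using hmap.ne hA
  · simpa using hmap.ne hB
  · rw [← Submodule.map_inf l hl.1, hAB, Submodule.map_bot]

end SemilinearTransport

section CornerRing

variable {R R' : Type*} [Ring R] [Ring R']

variable (R) in
def cornerOneEquiv : Corner (1 : R) .one ≃+* R where
  toFun x := x.1
  invFun r := ⟨r, one_mul r, mul_one r⟩
  left_inv _ := rfl
  right_inv _ := rfl
  map_mul' _ _ := rfl
  map_add' _ _ := rfl

theorem HST.lsf (hR : HST R) : LSF R := fun hssf =>
  let σ : (Corner (1 : R) .one)ᵐᵒᵖ →+* Rᵐᵒᵖ := (cornerOneEquiv R).toRingHom.op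
  have : RingHomSurjective σ := ⟨(cornerOneEquiv R).op.surjective⟩
  let l : rightPart (1 : R) →ₛₗ[σ] R :=
    { toFun := Subtype.val, map_add' := fun _ _ => rfl, map_smul' := fun _ _ => rfl }
  have hl : Bijective l := ⟨Subtype.val_injective, fun r => ⟨⟨r, mul_one r⟩, rfl⟩⟩
  let σ' : R →+* Corner (1 : R) .one := (cornerOneEquiv R).symm.toRingHom
  have : RingHomSurjective σ' := ⟨(cornerOneEquiv R).symm.surjective⟩
  let l' : R →ₛₗ[σ'] leftPart (1 : R) :=
    { toFun r := ⟨r, one_mul r⟩, map_add' := fun _ _ => rfl, map_smul' := fun _ _ => rfl }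
  have hl' : Bijective l' := ⟨fun _ _ h => congrArg Subtype.val h, fun x => ⟨x.1, rfl⟩⟩
  (hR 1 .one (IsSummandSquareFree.of_bijective hssf l hl)).of_bijective l' hl'

def Corner.map (f : R →+* R') {e : R} {e' : R'} (he : IsIdempotentElem e)
    (he' : IsIdempotentElem e') (hf : f e = e') : Corner e he →+* Corner e' he' where
  toFun x := ⟨f x.1, by rw [← hf, ← map_mul, x.2.1], by rw [← hf, ← map_mul, x.2.2]⟩
  map_one' := Subtype.ext hf
  map_mul' x y := Subtype.ext (map_mul f x.1 y.1)
  map_zero' := Subtype.ext (map_zero f)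
  map_add' x y := Subtype.ext (map_add f x.1 y.1)

def Corner.congr (f : R ≃+* R') {e : R} {e' : R'} (he : IsIdempotentElem e)
    (he' : IsIdempotentElem e') (hf : f e = e') : Corner e he ≃+* Corner e' he' :=
  { Corner.map f.toRingHom he he' hf with
    invFun := Corner.map f.symm.toRingHom he' he (by rw [← hf]; exact f.symm_apply_apply e)
    left_inv := fun x => Subtype.ext (f.symm_apply_apply x.1)
    right_inv := fun y => Subtype.ext (f.apply_symm_apply y.1) }

def Corner.prodEquiv {S T : Type*} [Ring S] [Ring T] {e : S × T} (he : IsIdempotentElem e)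
    (h₁ : IsIdempotentElem e.1) (h₂ : IsIdempotentElem e.2) :
    Corner e he ≃+* Corner e.1 h₁ × Corner e.2 h₂ :=
  { (Corner.map (RingHom.fst S T) he h₁ rfl).prod (Corner.map (RingHom.snd S T) he h₂ rfl) with
    invFun := fun y => ⟨(y.1.1, y.2.1), Prod.ext y.1.2.1 y.2.2.1, Prod.ext y.1.2.2 y.2.2.2⟩
    left_inv := fun _ => rfl
    right_inv := fun _ => rfl }

end CornerRing

section CornerSemisimple

variable {S : Type*} [Ring S] {e : S}

theorem mul_eq_self_of_mem_span_singleton (he : IsIdempotentElem e) {y : S}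
    (hy : y ∈ Submodule.span S {e}) : y * e = y := by
  obtain ⟨a, rfl⟩ := Submodule.mem_span_singleton.mp hy
  rw [smul_eq_mul, mul_assoc, he.eq]

def Corner.ofEndSpan (he : IsIdempotentElem e) :
    (Module.End S (Submodule.span S {e}))ᵐᵒᵖ →+* Corner e he :=
  let e' : Submodule.span S {e} := ⟨e, Submodule.mem_span_singleton_self e⟩
  have he' : e • e' = e' := Subtype.ext he.eq
  have hsmul : ∀ y : Submodule.span S {e}, (y : S) • e' = y :=
    fun y => Subtype.ext (mul_eq_self_of_mem_span_singleton he y.2)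
  { toFun φ := ⟨(φ.unop e' : S), by
        conv_rhs => rw [← he', map_smul]
        rfl, mul_eq_self_of_mem_span_singleton he (φ.unop e').2⟩
    map_one' := rfl
    map_mul' φ ψ := Subtype.ext <| by
      change ((ψ.unop (φ.unop e')) : S) = (φ.unop e' : S) * (ψ.unop e' : S)
      conv_lhs => rw [← hsmul (φ.unop e'), map_smul]
      rfl
    map_zero' := rfl
    map_add' _ _ := rfl }

theorem Corner.ofEndSpan_surjective (he : IsIdempotentElem e) :
    Surjective (Corner.ofEndSpan he) := fun x =>
  ⟨.op { toFun y := ⟨y.1 * x.1, by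
            rw [← x.2.2, ← mul_assoc]
            exact Submodule.smul_mem _ _ (Submodule.mem_span_singleton_self e)⟩
         map_add' _ _ := Subtype.ext (add_mul _ _ _)
         map_smul' _ _ := Subtype.ext (mul_assoc _ _ _) },
    Subtype.ext x.2.1⟩

theorem IsSemisimpleRing.corner [IsSemisimpleRing S] (he : IsIdempotentElem e) :
    IsSemisimpleRing (Corner e he) :=
  have := IsSemisimpleRing.moduleEnd S (Submodule.span S {e})
  (Corner.ofEndSpan he).isSemisimpleRing_of_surjective (Corner.ofEndSpan_surjective he)

end CornerSemisimple

section CentralIdempotent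

open Module.End LinearMap

variable {R M : Type*} [Ring R] [AddCommGroup M] [Module R M]

theorem isEssentialIn_self (X : Submodule R M) : IsEssentialIn X X :=
  ⟨le_rfl, fun N hN hN0 => by rwa [inf_eq_right.mpr hN]⟩

theorem IsCompl.isDirectSummand_of_le {A B P : Submodule R M} (hAB : IsCompl A B)
    [IsSemisimpleModule R A] (hP : P ≤ A) : IsDirectSummand P := by
  have := A.mapIic.complementedLattice_iff.mp inferInstance
  obtain ⟨W, hPW, hPWA⟩ :=
    IsModularLattice.exists_disjoint_and_sup_eq (a := (⟨P, hP⟩ : Set.Iic A)) (b := ⊤) le_top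
  refine ⟨W ⊔ B, (Set.Iic.disjoint_iff.mp hPW).isCompl_sup_right_of_isCompl_sup_left ?_⟩
  rwa [show P ⊔ (W : Submodule R M) = A from congrArg Subtype.val hPWA]

theorem IsSquareFreeModule.eq_bot_of_injective {K P : Submodule R M}
    (hK : IsSquareFreeModule R K) (hPK : P ≤ K) (g : P →ₗ[R] M) (hg : Injective g)
    (hgK : range g ≤ K) (hdisj : Disjoint P (range g)) : P = ⊥ := by
  by_contra hP
  have : Nontrivial P := Submodule.nontrivial_iff_ne_bot.mpr hP
  have : Nontrivial (range g) := (LinearEquiv.ofInjective g hg).toEquiv.symm.nontrivial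
  refine (hK _ _ ?_ ?_ ?_).false ((Submodule.comapSubtypeEquivOfLe hPK).trans
    ((LinearEquiv.ofInjective g hg).trans (Submodule.comapSubtypeEquivOfLe hgK).symm))
  · exact Submodule.nontrivial_iff_ne_bot.mp (Submodule.comapSubtypeEquivOfLe hPK).nontrivial
  · exact Submodule.nontrivial_iff_ne_bot.mp (Submodule.comapSubtypeEquivOfLe hgK).nontrivial
  · rw [← Submodule.comap_inf, hdisj.eq_bot, Submodule.comap_bot, Submodule.ker_subtype]

variable {c : R} (hcen : c ∈ Set.center R)

theorem disjoint_ker_smulLeft_of_linearEquiv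
    (hK : IsSquareFreeModule R (ker (smulLeft c hcen : Module.End R M)))
    {U V : Submodule R M} (hUV : Disjoint U V) (Ψ : U ≃ₗ[R] V) :
    Disjoint U (ker (smulLeft c hcen)) := by
  let g := V.subtype ∘ₗ Ψ.toLinearMap ∘ₗ
    Submodule.inclusion (inf_le_left : U ⊓ ker (smulLeft c hcen) ≤ U)
  refine disjoint_iff.mpr (hK.eq_bot_of_injective inf_le_right g ?_ ?_ ?_)
  · exact V.injective_subtype.comp (Ψ.injective.comp (Submodule.inclusion_injective _))
  · rintro _ ⟨x, rfl⟩
    have hx : c • x = 0 := Subtype.ext (by simpa using x.2.2)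
    simp only [mem_ker, smulLeft_apply]
    rw [← map_smul g, hx, map_zero]
  · exact hUV.mono inf_le_left ((range_comp_le_range _ _).trans (Submodule.range_subtype V).le)

variable (hc : IsIdempotentElem c)
include hc

theorem isIdempotentElem_smulLeft : IsIdempotentElem (smulLeft c hcen : Module.End R M) :=
  LinearMap.ext fun x => by simp [smul_smul, hc.eq]

theorem le_range_smulLeft_of_disjoint_ker {P : Submodule R M}
    (hP : Disjoint P (ker (smulLeft c hcen))) : P ≤ range (smulLeft c hcen) := by
  intro x hx
  have hker : x - c • x ∈ ker (smulLeft c hcen) := by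
    simp [smul_sub, smul_smul, hc.eq]
  have : x - c • x = 0 := (Submodule.disjoint_def.mp hP) _ (P.sub_mem hx (P.smul_mem c hx)) hker
  exact ⟨x, by simpa [sub_eq_zero, eq_comm] using this⟩

theorem le_range_smulLeft_of_linearEquiv
    (hK : IsSquareFreeModule R (ker (smulLeft c hcen : Module.End R M)))
    {U V : Submodule R M} (hUV : Disjoint U V) (Ψ : U ≃ₗ[R] V) :
    U ≤ range (smulLeft c hcen) :=
  le_range_smulLeft_of_disjoint_ker hcen hc (disjoint_ker_smulLeft_of_linearEquiv hcen hK hUV Ψ)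

theorem isDirectSummand_of_le_range_smulLeft
    [IsSemisimpleModule R (range (smulLeft c hcen : Module.End R M))] {P : Submodule R M}
    (hP : P ≤ range (smulLeft c hcen)) : IsDirectSummand P :=
  (isIdempotentElem_smulLeft hcen hc).isCompl.isDirectSummand_of_le hP

theorem isDirectSummand_of_map_le_range_smulLeft {M' : Type*} [AddCommGroup M'] [Module R M']
    [IsSemisimpleModule R (range (smulLeft c hcen : Module.End R M))]
    (ι : M' →ₗ[R] M) (hι : Injective ι) {Q : Submodule R M'}
    (hQ : Q.map ι ≤ range (smulLeft c hcen)) : IsDirectSummand Q := by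
  have hp := isIdempotentElem_smulLeft (M := M) hcen hc
  have hp' := isIdempotentElem_smulLeft (M := M') hcen hc
  have : IsSemisimpleModule R (range (smulLeft c hcen : Module.End R M')) := by
    refine .of_injective ((ι ∘ₗ Submodule.subtype _).codRestrict
      (range (smulLeft c hcen : Module.End R M)) fun x => ?_)
      ((injective_codRestrict_iff _).mpr (hι.comp Subtype.val_injective))
    rw [hp.mem_range_iff]
    change c • ι x = ι x
    rw [← map_smul]
    exact congrArg ι (hp'.mem_range_iff.mp x.2)
  refine isDirectSummand_of_le_range_smulLeft hcen hc fun y hy => hp'.mem_range_iff.mpr ?_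
  have := hp.mem_range_iff.mp (hQ ⟨y, hy, rfl⟩)
  exact hι (by simpa using this)

theorem isC4StarModule_of_smulLeft
    [IsSemisimpleModule R (range (smulLeft c hcen : Module.End R M))]
    (hK : IsSquareFreeModule R (ker (smulLeft c hcen : Module.End R M))) :
    IsC4StarModule R M := by
  intro N A B hAB f ⟨K, hK'⟩
  let ιA := N.subtype ∘ₗ A.subtype
  let ιB := N.subtype ∘ₗ B.subtype
  have hιA : Injective ιA := N.injective_subtype.comp A.injective_subtype
  have hιB : Injective ιB := N.injective_subtype.comp B.injective_subtype
  let Ψ : (range f).map ιB ≃ₗ[R] K.map ιA :=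
    (Submodule.equivMapOfInjective ιB hιB _).symm ≪≫ₗ f.quotKerEquivRange.symm ≪≫ₗ
      Submodule.quotientEquivOfIsCompl _ _ hK' ≪≫ₗ Submodule.equivMapOfInjective ιA hιA K
  have hdisj : Disjoint ((range f).map ιB) (K.map ιA) := by
    refine (Submodule.disjoint_map N.injective_subtype hAB.symm.disjoint).mono ?_ ?_ <;>
      simpa only [ιA, ιB, Submodule.map_comp] using
        Submodule.map_mono (Submodule.map_subtype_le _ _)
  exact isDirectSummand_of_map_le_range_smulLeft hcen hc ιB hιB
    (le_range_smulLeft_of_linearEquiv hcen hc hK hdisj Ψ)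

theorem isSemiWeakCS_of_smulLeft
    [IsSemisimpleModule R (range (smulLeft c hcen : Module.End R M))]
    (hK : IsSquareFreeModule R (ker (smulLeft c hcen : Module.End R M))) :
    IsSemiWeakCS R M := by
  intro C _
  have hX (t : SWTriple R M) : t.X ≤ range (smulLeft c hcen) :=
    le_range_smulLeft_of_linearEquiv hcen hc hK (disjoint_iff.mpr t.disj) t.f
  have hY (t : SWTriple R M) : t.Y ≤ range (smulLeft c hcen) :=
    le_range_smulLeft_of_linearEquiv hcen hc hK (disjoint_iff.mpr t.disj).symm t.f.symm
  exact ⟨_, _, isDirectSummand_of_le_range_smulLeft hcen hc (iSup₂_le fun t _ => hX t),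
    isDirectSummand_of_le_range_smulLeft hcen hc (iSup₂_le fun t _ => hY t),
    isEssentialIn_self _, isEssentialIn_self _⟩

end CentralIdempotent

section ProductRing

open Module.End LinearMap

variable {C D D₁ D₂ : Type*} [Ring C] [Ring D] [Ring D₁] [Ring D₂]

theorem bijective_toSemilinearMap_comp_subtype {σ : C →+* D} {P : Submodule C C}
    (hinj : ∀ x ∈ P, σ x = 0 → x = 0) (hsurj : ∀ y, ∃ x ∈ P, σ x = y) :
    Bijective (σ.toSemilinearMap.comp P.subtype) := by
  refine ⟨(injective_iff_map_eq_zero _).mpr fun x hx => Subtype.ext (hinj x x.2 hx), fun y => ?_⟩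
  obtain ⟨x, hx, rfl⟩ := hsurj y
  exact ⟨⟨x, hx⟩, rfl⟩

theorem isStronglyLeftC4StarRing_of_ringEquiv_prod (φ : C ≃+* D₁ × D₂) [IsSemisimpleRing D₁]
    (hD₂ : IsSquareFreeModule D₂ D₂) : IsStronglyLeftC4StarRing C := by
  set c := φ.symm (1, 0)
  have hcen : c ∈ Set.center C := Semigroup.mem_center_iff.mpr fun x =>
    φ.injective (by simp [c, Prod.ext_iff])
  have hc : IsIdempotentElem c := φ.injective (by simp [c])
  have hrange : ∀ x, x ∈ range (smulLeft c hcen) ↔ (φ x).2 = 0 := fun x => by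
    rw [(isIdempotentElem_smulLeft hcen hc).mem_range_iff, smulLeft_apply, smul_eq_mul,
      ← φ.injective.eq_iff]
    simp [c, Prod.ext_iff, eq_comm]
  have hker : ∀ x, x ∈ ker (smulLeft c hcen) ↔ (φ x).1 = 0 := fun x => by
    rw [mem_ker, smulLeft_apply, smul_eq_mul, ← φ.injective.eq_iff]
    simp [c, Prod.ext_iff]
  let σ₁ := (RingHom.fst D₁ D₂).comp φ.toRingHom
  let σ₂ := (RingHom.snd D₁ D₂).comp φ.toRingHom
  have : RingHomSurjective σ₁ := ⟨fun y => ⟨φ.symm (y, 0), by simp [σ₁]⟩⟩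
  have : RingHomSurjective σ₂ := ⟨fun y => ⟨φ.symm (0, y), by simp [σ₂]⟩⟩
  have h₁ := bijective_toSemilinearMap_comp_subtype (σ := σ₁) (P := range (smulLeft c hcen))
    (fun x hx hx' => φ.injective <|
      Prod.ext (by simpa [σ₁] using hx') (by simpa using (hrange x).mp hx))
    (fun y => ⟨φ.symm (y, 0), (hrange _).mpr (by simp), by simp [σ₁]⟩)
  have h₂ := bijective_toSemilinearMap_comp_subtype (σ := σ₂) (P := ker (smulLeft c hcen))
    (fun x hx hx' => φ.injective <|
      Prod.ext (by simpa using (hker x).mp hx) (by simpa [σ₂] using hx'))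
    (fun y => ⟨φ.symm (0, y), (hker _).mpr (by simp), by simp [σ₂]⟩)
  have : IsSemisimpleModule C (range (smulLeft c hcen)) :=
    (LinearMap.isSemisimpleModule_iff_of_bijective _ h₁).mpr ‹IsSemisimpleRing D₁›
  have hK := hD₂.of_bijective _ h₂
  exact ⟨isSemiWeakCS_of_smulLeft hcen hc hK, isC4StarModule_of_smulLeft hcen hc hK⟩

end ProductRing

theorem full_corner_transfer_general {R S T : Type*} [Ring R] [Ring S] [Ring T]
    (d : RightToLeftSymmetryDatum R S T)
    (ε : S × T) (hε : IsIdempotentElem ε)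
    (he : IsIdempotentElem (d.iso.symm ε))
    (h2 : IsIdempotentElem ε.2)
    (hssf : IsSummandSquareFree (Corner ε.2 h2)ᵐᵒᵖ (Corner ε.2 h2))
    (hhst : HST (Corner ε.2 h2)) :
    IsStronglyLeftC4StarRing (Corner (d.iso.symm ε) he) := by
  have h1 : IsIdempotentElem ε.1 := congrArg Prod.fst hε
  have := d.semisimpleArtinian
  have : IsSemisimpleRing (Corner ε.1 h1) := IsSemisimpleRing.corner h1
  exact isStronglyLeftC4StarRing_of_ringEquiv_prod
    ((Corner.congr d.iso he hε (d.iso.apply_symm_apply ε)).trans (Corner.prodEquiv hε h1 h2))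
    (hhst.lsf hssf)

/-- Let `R` be a strongly right `C4*`-ring with a right-to-left symmetry datum
`R ≅ S × T`, and let `e = (e₁, e₂)` (i.e. `e = iso.symm ε` with `ε = (ε.1, ε.2) : S × T`) be
an idempotent of `R` with `ReR = R`. If the residual corner `ε.2 T ε.2` has
summand-square-free right regular module and satisfies `HST` and `CSA`, then the full corner
`eRe` is a strongly left `C4*`-ring. -/
theorem full_corner_transfer {R S T : Type*} [Ring R] [Ring S] [Ring T]
    (h : IsStronglyRightC4StarRing R)
    (d : RightToLeftSymmetryDatum R S T)
    (ε : S × T) (hε : IsIdempotentElem ε)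
    (he : IsIdempotentElem (d.iso.symm ε))
    (hfull : ∀ r : R, ∃ (n : ℕ) (a b : Fin n → R),
      r = ∑ i, a i * (d.iso.symm ε) * b i)
    (h2 : IsIdempotentElem ε.2)
    (hssf : IsSummandSquareFree (Corner ε.2 h2)ᵐᵒᵖ (Corner ε.2 h2))
    (hhst : HST (Corner ε.2 h2)) (hcsa : CSAxiom (Corner ε.2 h2)) :
    IsStronglyLeftC4StarRing (Corner (d.iso.symm ε) he) :=
  full_corner_transfer_general d ε hε he h2 hssf hhst
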